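/- Let R be a ring and M a left R-module. Then M is virtually semisimple and quasi-projective if and only if M is epi-retractable and every submodule of M is M-projective. -/

import Mathlib

universe u v w

/-- A left `R`-module `M` is *virtually semisimple* if every submodule of `M` is
isomorphic, as an `R`-module, to a direct summand of `M`. -/
def IsVirtuallySemisimple (R : Type u) [Ring R] (M : Type v) [AddCommGroup M] [Module R M] :
    Prop :=
  ∀ N : Submodule R M, ∃ K : Submodule R M, (∃ K' : Submodule R M, IsCompl K K') ∧
    Nonempty (N ≃ₗ[R] K)

/-- A module is *completely virtually semisimple* if every submodule is virtually semisimple. -/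
def IsCompletelyVirtuallySemisimple (R : Type u) [Ring R] (M : Type v) [AddCommGroup M]
    [Module R M] : Prop :=
  ∀ N : Submodule R M, IsVirtuallySemisimple R N


/-- `P` is `M`-projective: every map from `P` to a quotient of `M` lifts to `M`. -/
def IsRelativelyProjective (R : Type u) [Ring R] (M : Type v) [AddCommGroup M] [Module R M]
    (P : Type w) [AddCommGroup P] [Module R P] : Prop :=
  ∀ (X : Type v) [AddCommGroup X] [Module R X] (g : M →ₗ[R] X) (f : P →ₗ[R] X),
    Function.Surjective g → ∃ h : P →ₗ[R] M, g ∘ₗ h = f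

/-- `M` is epi-retractable: for every submodule `N` of `M` there is a surjection `M → N`. -/
def IsEpiRetractable (R : Type u) [Ring R] (M : Type v) [AddCommGroup M] [Module R M] : Prop :=
  ∀ N : Submodule R M, ∃ f : M →ₗ[R] N, Function.Surjective f

/-! Both directions rest on the observation that a module is isomorphic to a direct summand of
`M` exactly when it is a retract of `M`. Retracts inherit `M`-projectivity, and retractions are
surjective; conversely, an `M`-projective module `N` splits every surjection `M → N`, so an
epi-retractable `M` has every submodule as a retract. -/

section

variable {R : Type u} [Ring R] {M : Type v} [AddCommGroup M] [Module R M]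

theorem exists_isCompl_linearEquiv_iff_exists_retraction {N : Type w} [AddCommGroup N]
    [Module R N] :
    (∃ K : Submodule R M, (∃ K' : Submodule R M, IsCompl K K') ∧ Nonempty (N ≃ₗ[R] K)) ↔
      ∃ (i : N →ₗ[R] M) (r : M →ₗ[R] N), r ∘ₗ i = LinearMap.id := by
  constructor
  · rintro ⟨K, ⟨K', hKK'⟩, ⟨e⟩⟩
    refine ⟨K.subtype ∘ₗ e.toLinearMap, e.symm.toLinearMap ∘ₗ K.projectionOnto K' hKK', ?_⟩
    ext n
    simp [Submodule.projectionOnto_apply_left]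
  · rintro ⟨i, r, hri⟩
    have hleft : Function.LeftInverse r i := LinearMap.congr_fun hri
    have hproj : ∀ x : LinearMap.range i, (i.rangeRestrict ∘ₗ r) x = x := by
      rintro ⟨_, n, rfl⟩
      ext
      simp [hleft n]
    exact ⟨LinearMap.range i, ⟨_, LinearMap.isCompl_of_proj hproj⟩,
      ⟨LinearEquiv.ofInjective i hleft.injective⟩⟩

theorem isVirtuallySemisimple_iff_forall_exists_retraction :
    IsVirtuallySemisimple R M ↔
      ∀ N : Submodule R M, ∃ (i : N →ₗ[R] M) (r : M →ₗ[R] N), r ∘ₗ i = LinearMap.id :=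
  forall_congr' fun _ ↦ exists_isCompl_linearEquiv_iff_exists_retraction

theorem IsRelativelyProjective.of_retraction {P : Type w} [AddCommGroup P] [Module R P]
    {Q : Type*} [AddCommGroup Q] [Module R Q] (hP : IsRelativelyProjective R M P)
    (i : Q →ₗ[R] P) (r : P →ₗ[R] Q) (hri : r ∘ₗ i = LinearMap.id) :
    IsRelativelyProjective R M Q := by
  intro X _ _ g f hg
  obtain ⟨h, hgh⟩ := hP X g (f ∘ₗ r) hg
  refine ⟨h ∘ₗ i, ?_⟩
  rw [← LinearMap.comp_assoc, hgh, LinearMap.comp_assoc, hri, LinearMap.comp_id]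

theorem IsRelativelyProjective.exists_rightInverse {P : Type v} [AddCommGroup P] [Module R P]
    (hP : IsRelativelyProjective R M P) (f : M →ₗ[R] P) (hf : Function.Surjective f) :
    ∃ h : P →ₗ[R] M, f ∘ₗ h = LinearMap.id :=
  hP P f LinearMap.id hf

end

/-- `M` is virtually semisimple and quasi-projective iff `M` is epi-retractable and every
submodule of `M` is `M`-projective. -/
theorem stmt_2 (R : Type u) [Ring R] (M : Type v) [AddCommGroup M] [Module R M] :
    (IsVirtuallySemisimple R M ∧ IsRelativelyProjective R M M) ↔
      (IsEpiRetractable R M ∧ ∀ N : Submodule R M, IsRelativelyProjective R M N) := by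
  rw [isVirtuallySemisimple_iff_forall_exists_retraction]
  constructor
  · rintro ⟨hretract, hquasi⟩
    refine ⟨fun N ↦ ?_, fun N ↦ ?_⟩ <;> obtain ⟨i, r, hri⟩ := hretract N
    · exact ⟨r, Function.LeftInverse.surjective (LinearMap.congr_fun hri)⟩
    · exact hquasi.of_retraction i r hri
  · rintro ⟨hepi, hproj⟩
    refine ⟨fun N ↦ ?_, (hproj ⊤).of_retraction Submodule.topEquiv.symm.toLinearMap
      Submodule.topEquiv.toLinearMap (by ext; simp)⟩
    obtain ⟨f, hf⟩ := hepi N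
    obtain ⟨h, hfh⟩ := (hproj N).exists_rightInverse f hf
    exact ⟨h, f, hfh⟩
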